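/- arXiv:2203.14623 — 3 statements merged into one kernel-verified Lean document; each statement's English description precedes it below -/
import Mathlib

section
/- Let x₁, x₃, I_d, I_q, y₁, y₂, y₃, y₄, R_s, x_q, x_d' be real numbers such that the stator algebraic equation i·x₃·exp(i(x₁ − π/2)) = (R_s + i·x_d')·y₃·exp(i·y₄) + y₁·exp(i·y₂) − (x_q − x_d')·I_q·exp(i(x₁ − π/2)) holds and the dq-decomposition relation (I_d + i·I_q)·exp(i(x₁ − π/2)) = y₃·exp(i·y₄) holds. Then ((x_q − x_d')·I_d + x₃)·exp(i·x₁) = ψ, where ψ := (R_s + i·x_q)·y₃·exp(i·y₄) + y₁·exp(i·y₂). -/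
open Complex Real

theorem Complex.exp_I_mul_eq_I_mul_exp_I_mul_sub_pi_div_two (θ : ℂ) :
    exp (I * θ) = I * exp (I * (θ - π / 2)) := by
  calc exp (I * θ) = exp (π / 2 * I + I * (θ - π / 2)) := by ring_nf
    _ = I * exp (I * (θ - π / 2)) := by rw [exp_add, exp_pi_div_two_mul_I]

/-- From the stator algebraic equation and the dq-decomposition of the
terminal current, the phasor identity ((x_q − x_d')·I_d + x₃)·exp(i·x₁) = ψ follows,
where ψ = (R_s + i·x_q)·y₃·exp(i·y₄) + y₁·exp(i·y₂). -/
theorem stator_phasor_identity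
    (x₁ x₃ I_d I_q y₁ y₂ y₃ y₄ R_s x_q x_d' : ℝ)
    (hstator : Complex.I * (x₃ : ℂ) * Complex.exp (Complex.I * ((x₁ : ℂ) - Real.pi / 2)) =
      ((R_s : ℂ) + Complex.I * (x_d' : ℂ)) * (y₃ : ℂ) * Complex.exp (Complex.I * (y₄ : ℂ)) +
      (y₁ : ℂ) * Complex.exp (Complex.I * (y₂ : ℂ)) -
      ((x_q : ℂ) - (x_d' : ℂ)) * (I_q : ℂ) * Complex.exp (Complex.I * ((x₁ : ℂ) - Real.pi / 2)))
    (hdq : ((I_d : ℂ) + Complex.I * (I_q : ℂ)) *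
      Complex.exp (Complex.I * ((x₁ : ℂ) - Real.pi / 2)) =
      (y₃ : ℂ) * Complex.exp (Complex.I * (y₄ : ℂ))) :
    (((x_q - x_d') * I_d + x₃ : ℝ) : ℂ) * Complex.exp (Complex.I * (x₁ : ℂ)) =
      ((R_s : ℂ) + Complex.I * (x_q : ℂ)) * (y₃ : ℂ) * Complex.exp (Complex.I * (y₄ : ℂ)) +
      (y₁ : ℂ) * Complex.exp (Complex.I * (y₂ : ℂ)) := by
  rw [exp_I_mul_eq_I_mul_exp_I_mul_sub_pi_div_two]
  push_cast
  -- The term i(x_q − x_d')·y₃e^{iy₄} is traded for its dq-form via `hdq`; the I_q parts then cancel as i² = −1.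
  linear_combination hstator + I * ((x_q : ℂ) - x_d') * hdq +
    ((x_d' : ℂ) - x_q) * exp (I * ((x₁ : ℂ) - π / 2)) * I_q * I_sq
end

section
/- Fix real numbers y₁, y₂, y₃, y₄, R_s, x_q, x_d'. Suppose (x₁, x₃, I_d, I_q) and (x₁', x₃', I_d', I_q') are two tuples of real numbers, each satisfying the stator algebraic equation i·x₃·exp(i(x₁ − π/2)) = (R_s + i·x_d')·y₃·exp(i·y₄) + y₁·exp(i·y₂) − (x_q − x_d')·I_q·exp(i(x₁ − π/2)) together with the dq-decomposition relation (I_d + i·I_q)·exp(i(x₁ − π/2)) = y₃·exp(i·y₄) (respectively with primed variables), and each satisfying the positivity condition (x_q − x_d')·I_d + x₃ > 0 (respectively primed). Then x₃ = x₃' and x₁ ≡ x₁' modulo 2π (i.e., there exists an integer n with x₁ − x₁' = 2πn). -/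
open Complex Real

/-!
Adding `i (x_q - x_d') I_d e` to both sides of the stator equation, with `e = exp (i (x₁ - π/2))`,
and using the dq-relation turns it into `i ((x_q - x_d') I_d + x₃) e = W`, where `W` depends only
on the measurements and the machine parameters. Since `|i e| = 1` and the real factor is positive,
this is the polar decomposition of `W`: the modulus and the phasor `e` are determined by `W`.
The phasor fixes `x₁` modulo `2π` and, through the dq-relation, `I_d`; hence it also fixes `x₃`.
-/

theorem I_mul_add_mul_eq_of_stator {k x₃ Id Iq e Y Z : ℂ}
    (hstator : I * x₃ * e = Z - k * Iq * e) (hdq : (Id + I * Iq) * e = Y) :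
    I * (k * Id + x₃) * e = Z + I * k * Y := by
  linear_combination hstator + I * k * hdq - k * Iq * e * I_sq

theorem eq_and_eq_of_ofReal_mul_eq_ofReal_mul {r r' : ℝ} {u u' : ℂ} (hr : 0 < r) (hr' : 0 < r')
    (hu : ‖u‖ = 1) (hu' : ‖u'‖ = 1) (h : (r : ℂ) * u = r' * u') : r = r' ∧ u = u' := by
  have hrr' : r = r' := by
    simpa [hu, hu', abs_of_pos hr, abs_of_pos hr'] using congrArg (‖·‖) h
  subst hrr'
  exact ⟨rfl, mul_left_cancel₀ (ofReal_ne_zero.mpr hr.ne') h⟩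

theorem exists_int_of_exp_I_mul_eq {x y : ℝ} (h : exp (I * x) = exp (I * y)) :
    ∃ n : ℤ, x - y = 2 * π * n := by
  obtain ⟨n, hn⟩ := exp_eq_exp_iff_exists_int.mp h
  have hreal : ((x - y - 2 * π * n : ℝ) : ℂ) = 0 := by
    push_cast
    linear_combination -I * hn + ((x : ℂ) - y - 2 * π * n) * I_sq
  exact ⟨n, by linarith [ofReal_eq_zero.mp hreal]⟩

theorem norm_I_mul_exp_I_mul_sub_pi_div_two (x : ℝ) :
    ‖I * exp (I * ((x : ℂ) - π / 2))‖ = 1 := by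
  rw [norm_mul, norm_I, one_mul, ← ofReal_ofNat, ← ofReal_div, ← ofReal_sub]
  exact norm_exp_I_mul_ofReal _

/-- Uniqueness in Lemma 1: two tuples (x₁, x₃, I_d, I_q) and
(x₁', x₃', I_d', I_q') satisfying the stator algebraic equation, the dq-decomposition
relation and the positivity condition (for the same measurements y₁, y₂, y₃, y₄ and
machine parameters R_s, x_q, x_d') have x₃ = x₃' and x₁ ≡ x₁' (mod 2π). -/
theorem lemma1_uniqueness
    (y₁ y₂ y₃ y₄ R_s x_q x_d' : ℝ)
    (x₁ x₃ I_d I_q x₁' x₃' I_d' I_q' : ℝ)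
    (hstator : Complex.I * (x₃ : ℂ) * Complex.exp (Complex.I * ((x₁ : ℂ) - Real.pi / 2)) =
      ((R_s : ℂ) + Complex.I * (x_d' : ℂ)) * (y₃ : ℂ) * Complex.exp (Complex.I * (y₄ : ℂ)) +
      (y₁ : ℂ) * Complex.exp (Complex.I * (y₂ : ℂ)) -
      ((x_q : ℂ) - (x_d' : ℂ)) * (I_q : ℂ) * Complex.exp (Complex.I * ((x₁ : ℂ) - Real.pi / 2)))
    (hdq : ((I_d : ℂ) + Complex.I * (I_q : ℂ)) *
      Complex.exp (Complex.I * ((x₁ : ℂ) - Real.pi / 2)) =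
      (y₃ : ℂ) * Complex.exp (Complex.I * (y₄ : ℂ)))
    (hpos : (x_q - x_d') * I_d + x₃ > 0)
    (hstator' : Complex.I * (x₃' : ℂ) * Complex.exp (Complex.I * ((x₁' : ℂ) - Real.pi / 2)) =
      ((R_s : ℂ) + Complex.I * (x_d' : ℂ)) * (y₃ : ℂ) * Complex.exp (Complex.I * (y₄ : ℂ)) +
      (y₁ : ℂ) * Complex.exp (Complex.I * (y₂ : ℂ)) -
      ((x_q : ℂ) - (x_d' : ℂ)) * (I_q' : ℂ) * Complex.exp (Complex.I * ((x₁' : ℂ) - Real.pi / 2)))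
    (hdq' : ((I_d' : ℂ) + Complex.I * (I_q' : ℂ)) *
      Complex.exp (Complex.I * ((x₁' : ℂ) - Real.pi / 2)) =
      (y₃ : ℂ) * Complex.exp (Complex.I * (y₄ : ℂ)))
    (hpos' : (x_q - x_d') * I_d' + x₃' > 0) :
    x₃ = x₃' ∧ ∃ n : ℤ, x₁ - x₁' = 2 * Real.pi * n := by
  have hpolar : (((x_q - x_d') * I_d + x₃ : ℝ) : ℂ) * (I * exp (I * ((x₁ : ℂ) - π / 2))) =
      (((x_q - x_d') * I_d' + x₃' : ℝ) : ℂ) * (I * exp (I * ((x₁' : ℂ) - π / 2))) := by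
    push_cast
    linear_combination I_mul_add_mul_eq_of_stator hstator hdq -
      I_mul_add_mul_eq_of_stator hstator' hdq'
  obtain ⟨hmodulus, hphasor⟩ := eq_and_eq_of_ofReal_mul_eq_ofReal_mul hpos hpos'
    (norm_I_mul_exp_I_mul_sub_pi_div_two x₁) (norm_I_mul_exp_I_mul_sub_pi_div_two x₁') hpolar
  have hexp := mul_left_cancel₀ I_ne_zero hphasor
  have hId : I_d = I_d' := by
    have hcurrent := mul_right_cancel₀ (Complex.exp_ne_zero _) (hdq.trans (hexp ▸ hdq'.symm))
    simpa using congrArg re hcurrent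
  refine ⟨by rw [hId] at hmodulus; linarith, ?_⟩
  obtain ⟨n, hn⟩ :=
    exists_int_of_exp_I_mul_eq (x := x₁ - π / 2) (y := x₁' - π / 2) (by push_cast; exact hexp)
  exact ⟨n, by linarith⟩
end

section
/- Let k, θ₁, θ₂ be real numbers with θ₁ + k > 0, and let x₁, x₂, x₂ᴵ : [0, ∞) → ℝ be differentiable functions and θ̂₁, θ̂₂, u : [0, ∞) → ℝ be continuous functions such that for all t ≥ 0: x₁'(t) = x₂(t), x₂'(t) = −θ₁·x₂(t) + θ₂·u(t), and x₂ᴵ'(t) = −(θ̂₁(t) + k)·(x₂ᴵ(t) + k·x₁(t)) + θ̂₂(t)·u(t). Assume that x₂ and u are bounded on [0, ∞) and that θ̂₁(t) → θ₁ and θ̂₂(t) → θ₂ as t → ∞. Define x̂₂(t) := x₂ᴵ(t) + k·x₁(t). Then x̂₂(t) − x₂(t) → 0 as t → ∞. -/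
/-!
The error `e = x̂₂ - x₂` solves `e' = -(θ̂₁ + k) e + d` with forcing
`d = (θ₁ - θ̂₁) x₂ + (θ̂₂ - θ₂) u`, which tends to `0` as a vanishing factor times a bounded one,
while the coefficient tends to `θ₁ + k > 0`. With `c = (θ₁ + k) / 2`, Young's inequality turns this
into `(e²)' ≤ -c e² + d² / c` for large `t`, and comparing `e²` with the explicit solution of
`y' = -c y + c β` shows that `e²` is eventually below `2 β` for every `β > 0`.
-/

open Real Filter Topology Set

-- The right-hand side is the solution of `y' = -c y + c β` through `(T, V T)`.
theorem le_of_hasDerivAt_le_neg_mul_add {V V' g : ℝ → ℝ} {c β T : ℝ}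
    (hV : ∀ t ≥ T, HasDerivAt V (V' t) t) (hV' : ∀ t ≥ T, V' t ≤ -c * V t + g t)
    (hg : ∀ t ≥ T, g t < c * β) {t : ℝ} (ht : T ≤ t) :
    V t ≤ β + (V T - β) * exp (-(c * (t - T))) := by
  set B : ℝ → ℝ := fun s => β + (V T - β) * exp (-(c * (s - T)))
  have hB : ∀ s, HasDerivAt B (-c * B s + c * β) s := fun s =>
    ((((hasDerivAt_id' s).sub_const T).const_mul c).fun_neg.exp.const_mul (V T - β)).const_add β
      |>.congr_deriv (by simp only [B]; ring)
  refine image_le_of_deriv_right_lt_deriv_boundary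
    (fun s hs => (hV s hs.1).continuousAt.continuousWithinAt)
    (fun s hs => (hV s hs.1).hasDerivWithinAt) (by simp [B]) hB
    (fun s hs hVB => ?_) ⟨ht, le_rfl⟩
  calc V' s ≤ -c * V s + g s := hV' s hs.1
    _ < -c * B s + c * β := by rw [hVB]; linarith [hg s hs.1]

theorem tendsto_zero_of_hasDerivAt_le_neg_mul_add {V V' g : ℝ → ℝ} {c : ℝ} (hc : 0 < c)
    (hV : ∀ᶠ t in atTop, HasDerivAt V (V' t) t ∧ V' t ≤ -c * V t + g t)
    (hV₀ : ∀ᶠ t in atTop, 0 ≤ V t) (hg : Tendsto g atTop (𝓝 0)) :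
    Tendsto V atTop (𝓝 0) := by
  refine tendsto_order.2 ⟨fun b hb => hV₀.mono fun t ht => hb.trans_le ht, fun b hb => ?_⟩
  have hcb : 0 < c * (b / 2) := by positivity
  obtain ⟨T, hT⟩ := eventually_atTop.1 (hV.and (hg.eventually (gt_mem_nhds hcb)))
  have hbound : ∀ t ≥ T, V t ≤ b / 2 + (V T - b / 2) * exp (-(c * (t - T))) :=
    fun t ht => le_of_hasDerivAt_le_neg_mul_add (fun s hs => (hT s hs).1.1)
      (fun s hs => (hT s hs).1.2) (fun s hs => (hT s hs).2) ht
  have hdecay : Tendsto (fun t => b / 2 + (V T - b / 2) * exp (-(c * (t - T)))) atTop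
      (𝓝 (b / 2)) := by
    have h := (tendsto_exp_neg_atTop_nhds_zero.comp
      ((tendsto_atTop_add_const_right _ (-T) tendsto_id).const_mul_atTop hc)).const_mul
        (V T - b / 2)
    simpa [Function.comp_def, sub_eq_add_neg] using h.const_add (b / 2)
  filter_upwards [eventually_ge_atTop T, hdecay.eventually (gt_mem_nhds (half_lt_self hb))]
    with t ht hlt
  exact (hbound t ht).trans_lt hlt

-- Young's inequality `2 x y ≤ c x ^ 2 + y ^ 2 / c` absorbs the forcing term.
theorem two_mul_mul_neg_mul_add_le {x y a c : ℝ} (hc : 0 < c) (ha : c ≤ a) :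
    2 * x * (-a * x + y) ≤ -c * x ^ 2 + y ^ 2 / c := by
  obtain ⟨q, rfl⟩ : ∃ q, y = c * q := ⟨y / c, by field_simp⟩
  have hq : (c * q) ^ 2 / c = c * q ^ 2 := by field_simp
  rw [hq]
  nlinarith [mul_nonneg hc.le (sq_nonneg (x - q)), mul_nonneg (sub_nonneg.2 ha) (sq_nonneg x)]

theorem tendsto_zero_of_hasDerivAt_neg_mul_add {e a d : ℝ → ℝ} {α : ℝ} (hα : 0 < α)
    (he : ∀ᶠ t in atTop, HasDerivAt e (-a t * e t + d t) t)
    (ha : Tendsto a atTop (𝓝 α)) (hd : Tendsto d atTop (𝓝 0)) :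
    Tendsto e atTop (𝓝 0) := by
  have hc : 0 < α / 2 := half_pos hα
  have hsq : Tendsto (fun t => e t ^ 2) atTop (𝓝 0) := by
    refine tendsto_zero_of_hasDerivAt_le_neg_mul_add (V' := fun t => 2 * e t * (-a t * e t + d t))
      (g := fun t => d t ^ 2 / (α / 2)) hc ?_ (.of_forall fun t => sq_nonneg _)
      (by simpa using (hd.pow 2).div_const (α / 2))
    filter_upwards [he, ha.eventually (eventually_ge_nhds (half_lt_self hα))] with t het hat
    exact ⟨(het.fun_pow 2).congr_deriv (by ring), two_mul_mul_neg_mul_add_le hc hat⟩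
  exact (tendsto_zero_iff_abs_tendsto_zero e).2 (by simpa [Function.comp_def, sqrt_sq_eq_abs] using hsq.sqrt)

theorem isBoundedUnder_norm_of_forall_Ici {f : ℝ → ℝ} {T : ℝ}
    (hf : ∃ M : ℝ, ∀ t ∈ Ici T, |f t| ≤ M) : IsBoundedUnder (· ≤ ·) atTop (norm ∘ f) := by
  obtain ⟨M, hM⟩ := hf
  exact isBoundedUnder_of_eventually_le (a := M) ((eventually_ge_atTop T).mono hM)

theorem ii_observer_state_convergence_general
    (k θ₁ θ₂ : ℝ) (hk : 0 < θ₁ + k)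
    (x₁ x₂ x₂I θh₁ θh₂ u : ℝ → ℝ)
    (hx₁ : ∀ t ∈ Set.Ici (0 : ℝ), HasDerivAt x₁ (x₂ t) t)
    (hx₂ : ∀ t ∈ Set.Ici (0 : ℝ), HasDerivAt x₂ (-θ₁ * x₂ t + θ₂ * u t) t)
    (hx₂I : ∀ t ∈ Set.Ici (0 : ℝ), HasDerivAt x₂I
      (-(θh₁ t + k) * (x₂I t + k * x₁ t) + θh₂ t * u t) t)
    (hx₂bdd : ∃ M : ℝ, ∀ t ∈ Set.Ici (0 : ℝ), |x₂ t| ≤ M)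
    (hubdd : ∃ M : ℝ, ∀ t ∈ Set.Ici (0 : ℝ), |u t| ≤ M)
    (hθh₁ : Tendsto θh₁ atTop (nhds θ₁))
    (hθh₂ : Tendsto θh₂ atTop (nhds θ₂)) :
    Tendsto (fun t => (x₂I t + k * x₁ t) - x₂ t) atTop (nhds 0) := by
  have herr : ∀ᶠ t in atTop, HasDerivAt (fun t => x₂I t + k * x₁ t - x₂ t)
      (-(θh₁ t + k) * (x₂I t + k * x₁ t - x₂ t) +
        ((θ₁ - θh₁ t) * x₂ t + (θh₂ t - θ₂) * u t)) t := by
    filter_upwards [eventually_ge_atTop 0] with t ht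
    exact (((hx₂I t ht).add ((hx₁ t ht).const_mul k)).sub (hx₂ t ht)).congr_deriv (by ring)
  refine tendsto_zero_of_hasDerivAt_neg_mul_add hk herr (hθh₁.add_const k) ?_
  have hθ₁ : Tendsto (fun t => θ₁ - θh₁ t) atTop (𝓝 0) := by
    simpa using (tendsto_const_nhds (x := θ₁)).sub hθh₁
  have hθ₂ : Tendsto (fun t => θh₂ t - θ₂) atTop (𝓝 0) := by
    simpa using hθh₂.sub_const θ₂
  simpa using (hθ₁.zero_mul_isBoundedUnder_le (isBoundedUnder_norm_of_forall_Ici hx₂bdd)).add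
    (hθ₂.zero_mul_isBoundedUnder_le (isBoundedUnder_norm_of_forall_Ici hubdd))

/-- State-observation conclusion of Lemma 2: if the parameter estimates
θ̂₁, θ̂₂ converge to the true parameters θ₁, θ₂ (with θ₁ + k > 0), and x₂ and u are
bounded, then the I&I adaptive observer state estimate x̂₂ = x₂ᴵ + k·x₁ converges to
the plant state x₂. -/
theorem ii_observer_state_convergence
    (k θ₁ θ₂ : ℝ) (hk : 0 < θ₁ + k)
    (x₁ x₂ x₂I θh₁ θh₂ u : ℝ → ℝ)
    (hθh₁c : ContinuousOn θh₁ (Set.Ici (0 : ℝ)))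
    (hθh₂c : ContinuousOn θh₂ (Set.Ici (0 : ℝ)))
    (huc : ContinuousOn u (Set.Ici (0 : ℝ)))
    (hx₁ : ∀ t ∈ Set.Ici (0 : ℝ), HasDerivAt x₁ (x₂ t) t)
    (hx₂ : ∀ t ∈ Set.Ici (0 : ℝ), HasDerivAt x₂ (-θ₁ * x₂ t + θ₂ * u t) t)
    (hx₂I : ∀ t ∈ Set.Ici (0 : ℝ), HasDerivAt x₂I
      (-(θh₁ t + k) * (x₂I t + k * x₁ t) + θh₂ t * u t) t)
    (hx₂bdd : ∃ M : ℝ, ∀ t ∈ Set.Ici (0 : ℝ), |x₂ t| ≤ M)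
    (hubdd : ∃ M : ℝ, ∀ t ∈ Set.Ici (0 : ℝ), |u t| ≤ M)
    (hθh₁ : Tendsto θh₁ atTop (nhds θ₁))
    (hθh₂ : Tendsto θh₂ atTop (nhds θ₂)) :
    Tendsto (fun t => (x₂I t + k * x₁ t) - x₂ t) atTop (nhds 0) :=
  ii_observer_state_convergence_general k θ₁ θ₂ hk x₁ x₂ x₂I θh₁ θh₂ u hx₁ hx₂ hx₂I hx₂bdd hubdd
    hθh₁ hθh₂
end
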